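/- For every n ≥ 1, the Colless index of the maximally balanced tree with n leaves equals the minimum Colless index over all rooted bifurcating trees with n leaves. -/

import Mathlib

inductive BTree where
  | leaf : BTree
  | node : BTree → BTree → BTree
deriving DecidableEq

def BTree.leaves : BTree → ℕ
  | .leaf => 1
  | .node l r => l.leaves + r.leaves

def BTree.colless : BTree → ℕ
  | .leaf => 0
  | .node l r => l.colless + r.colless + (max l.leaves r.leaves - min l.leaves r.leaves)

/-- The maximally balanced bifurcating tree with `n` leaves:
`mb n = (mb ⌈n/2⌉, mb ⌊n/2⌋)` for `n ≥ 2`. -/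
def mb (n : ℕ) : BTree :=
  if h : n ≤ 1 then BTree.leaf
  else BTree.node (mb ((n + 1) / 2)) (mb (n / 2))
termination_by n
decreasing_by all_goals omega


/-!
Write `c n` for the Colless index of `mb n`. By induction on a tree `T`, `c (κ T) ≤ colless T`
follows from `c (a + b) ≤ c a + c b + (a - b)` for `b ≤ a`: replacing the root subtrees by
maximally balanced ones and then rebalancing the root does not increase the index. That inequality
holds by strong induction on `a`, splitting `a` and `b` by parity and using `c (2a) = 2 c a` and
`c (2a + 1) = c (a + 1) + c a + 1` for `a ≥ 1`.
-/

lemma mb_of_le_one {n : ℕ} (h : n ≤ 1) : mb n = .leaf := by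
  rw [mb, dif_pos h]

lemma mb_of_two_le {n : ℕ} (h : 2 ≤ n) : mb n = .node (mb ((n + 1) / 2)) (mb (n / 2)) := by
  rw [mb, dif_neg (by omega)]

lemma leaves_mb (n : ℕ) : (mb n).leaves = max n 1 := by
  induction n using Nat.strong_induction_on with
  | _ n ih =>
    rcases le_or_gt n 1 with h | h
    · rw [mb_of_le_one h, BTree.leaves]; omega
    · rw [mb_of_two_le h, BTree.leaves, ih _ (by omega), ih _ (by omega)]; omega

lemma colless_mb_of_le_one {n : ℕ} (h : n ≤ 1) : (mb n).colless = 0 := by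
  rw [mb_of_le_one h, BTree.colless]

lemma colless_mb_of_two_le {n : ℕ} (h : 2 ≤ n) :
    (mb n).colless = (mb ((n + 1) / 2)).colless + (mb (n / 2)).colless + n % 2 := by
  rw [mb_of_two_le h, BTree.colless, leaves_mb, leaves_mb]; omega

lemma colless_mb_two_mul (a : ℕ) : (mb (2 * a)).colless = 2 * (mb a).colless := by
  rcases Nat.eq_zero_or_pos a with rfl | ha
  · rw [colless_mb_of_le_one (by omega)]
  · rw [colless_mb_of_two_le (by omega), show (2 * a + 1) / 2 = a by omega,
      show 2 * a / 2 = a by omega]; omega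

lemma colless_mb_two_mul_add_one {a : ℕ} (ha : 1 ≤ a) :
    (mb (2 * a + 1)).colless = (mb (a + 1)).colless + (mb a).colless + 1 := by
  rw [colless_mb_of_two_le (by omega), show (2 * a + 1 + 1) / 2 = a + 1 by omega,
    show (2 * a + 1) / 2 = a by omega]; omega

lemma colless_mb_add_le {a b : ℕ} (hba : b ≤ a) :
    (mb (a + b)).colless ≤ (mb a).colless + (mb b).colless + (a - b) := by
  induction a using Nat.strong_induction_on generalizing b with
  | _ a ih =>
  rcases Nat.eq_zero_or_pos b with rfl | hb
  · simp only [add_zero, tsub_zero]; omega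
  rcases hba.eq_or_lt with rfl | hlt
  · rw [← two_mul, colless_mb_two_mul]; omega
  have c₁ : (mb 1).colless = 0 := colless_mb_of_le_one le_rfl
  obtain ⟨s, rfl | rfl⟩ := Nat.even_or_odd' a <;> obtain ⟨t, rfl | rfl⟩ := Nat.even_or_odd' b
  · have := ih s (by omega) (b := t) (by omega)
    rw [← mul_add, colless_mb_two_mul, colless_mb_two_mul, colless_mb_two_mul]; omega
  · rw [show 2 * s + (2 * t + 1) = 2 * (s + t) + 1 by ring, colless_mb_two_mul_add_one (by omega),
      colless_mb_two_mul]
    rcases Nat.eq_zero_or_pos t with rfl | ht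
    · have := ih s (by omega) (b := 1) (by omega)
      simp only [mul_zero, zero_add, add_zero, c₁] at this ⊢; omega
    · have h₁ : (mb (s + t + 1)).colless ≤ _ := ih s (by omega) (b := t + 1) (by omega)
      have h₂ := ih s (by omega) (b := t) (by omega)
      rw [colless_mb_two_mul_add_one ht]; omega
  · have h₁ := ih (s + 1) (by omega) (b := t) (by omega)
    have h₂ := ih s (by omega) (b := t) (by omega)
    rw [show s + 1 + t = s + t + 1 by ring] at h₁
    rw [show 2 * s + 1 + 2 * t = 2 * (s + t) + 1 by ring, colless_mb_two_mul_add_one (by omega),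
      colless_mb_two_mul_add_one (by omega), colless_mb_two_mul]; omega
  · rw [show 2 * s + 1 + (2 * t + 1) = 2 * (s + t + 1) by ring, colless_mb_two_mul,
      colless_mb_two_mul_add_one (by omega)]
    rcases Nat.eq_zero_or_pos t with rfl | ht
    · have := ih s (by omega) (b := 1) (by omega)
      simp only [mul_zero, zero_add, add_zero, c₁] at this ⊢; omega
    · have h₁ := ih (s + 1) (by omega) (b := t) (by omega)
      have h₂ : (mb (s + t + 1)).colless ≤ _ := ih s (by omega) (b := t + 1) (by omega)
      rw [show s + 1 + t = s + t + 1 by ring] at h₁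
      rw [colless_mb_two_mul_add_one ht]; omega

lemma colless_mb_leaves_le (T : BTree) : (mb T.leaves).colless ≤ T.colless := by
  induction T with
  | leaf => rw [BTree.leaves, colless_mb_of_le_one le_rfl]; exact Nat.zero_le _
  | node l r ihl ihr =>
    rw [BTree.leaves, BTree.colless]
    rcases le_total r.leaves l.leaves with h | h
    · have := colless_mb_add_le h
      omega
    · have := colless_mb_add_le h
      rw [add_comm] at this
      omega

theorem maxBalanced_colless_isLeast (n : ℕ) (hn : 1 ≤ n) :
    IsLeast {k : ℕ | ∃ T : BTree, T.leaves = n ∧ T.colless = k} (mb n).colless := by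
  refine ⟨⟨mb n, by rw [leaves_mb]; omega, rfl⟩, ?_⟩
  rintro k ⟨T, rfl, rfl⟩
  exact colless_mb_leaves_le T
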